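/- Let g11, g12, g21, g22 > 0 and P1, P2 > 0. Let (P11, P21, P12, P22) be a feasible power allocation achieving rates (R1, R2). If (2^R1 - 1)(2^R2 - 1) < 1 and P12 + P22 < P2, then there exists a feasible power allocation achieving user-1 rate exactly R1 and user-2 rate strictly greater than R2. -/

import Mathlib

/-- User-1 rate of a power allocation. -/
noncomputable def rate1 (g11 g12 P11 P21 P12 P22 : ℝ) : ℝ :=
  Real.logb 2 (1 + (g11 * P11 + g12 * P12) / (1 + g11 * P21 + g12 * P22))

/-- User-2 rate of a power allocation. -/
noncomputable def rate2 (g21 g22 P11 P21 P12 P22 : ℝ) : ℝ :=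
  Real.logb 2 (1 + (g21 * P21 + g22 * P22) / (1 + g21 * P11 + g22 * P12))

/-- Feasibility of a power allocation under per-BTS power budgets. -/
def feasible (P1 P2 P11 P21 P12 P22 : ℝ) : Prop :=
  0 ≤ P11 ∧ 0 ≤ P21 ∧ 0 ≤ P12 ∧ 0 ≤ P22 ∧ P11 + P21 ≤ P1 ∧ P12 + P22 ≤ P2

/-!
Write `a = 2^R1 - 1` and `b = 2^R2 - 1` for the two SINRs, so the hypothesis says `a * b < 1`.
Spend the slack of the second budget by raising `P22` by `ε` and `P12` by `a * ε`: user 1's signal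
grows by `a` times its interference growth, so its SINR stays the mediant value `a`, while user 2's
SINR `N / D` becomes `(N + g22 ε) / (D + a g22 ε)`, which is larger exactly because `a N < D`.
-/

open Real

noncomputable def sinr1 (g11 g12 P11 P21 P12 P22 : ℝ) : ℝ :=
  (g11 * P11 + g12 * P12) / (1 + g11 * P21 + g12 * P22)

noncomputable def sinr2 (g21 g22 P11 P21 P12 P22 : ℝ) : ℝ :=
  (g21 * P21 + g22 * P22) / (1 + g21 * P11 + g22 * P12)

theorem rate1_eq_logb_sinr1 (g11 g12 P11 P21 P12 P22 : ℝ) :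
    rate1 g11 g12 P11 P21 P12 P22 = logb 2 (1 + sinr1 g11 g12 P11 P21 P12 P22) := rfl

theorem rate2_eq_logb_sinr2 (g21 g22 P11 P21 P12 P22 : ℝ) :
    rate2 g21 g22 P11 P21 P12 P22 = logb 2 (1 + sinr2 g21 g22 P11 P21 P12 P22) := rfl

theorem sinr1_nonneg {g11 g12 P1 P2 P11 P21 P12 P22 : ℝ} (hg11 : 0 ≤ g11) (hg12 : 0 ≤ g12)
    (h : feasible P1 P2 P11 P21 P12 P22) : 0 ≤ sinr1 g11 g12 P11 P21 P12 P22 := by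
  obtain ⟨h11, h21, h12, h22, -⟩ := h
  unfold sinr1
  positivity

theorem sinr2_nonneg {g21 g22 P1 P2 P11 P21 P12 P22 : ℝ} (hg21 : 0 ≤ g21) (hg22 : 0 ≤ g22)
    (h : feasible P1 P2 P11 P21 P12 P22) : 0 ≤ sinr2 g21 g22 P11 P21 P12 P22 := by
  obtain ⟨h11, h21, h12, h22, -⟩ := h
  unfold sinr2
  positivity

theorem two_rpow_logb_one_add_sub_one {x : ℝ} (hx : -1 < x) :
    (2 : ℝ) ^ logb 2 (1 + x) - 1 = x := by
  rw [rpow_logb two_pos (by norm_num) (by linarith)]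
  ring

theorem div_lt_add_div_add_mul {n d a c : ℝ} (hd : 0 < d) (ha : 0 ≤ a) (hc : 0 < c)
    (h : a * (n / d) < 1) : n / d < (n + c) / (d + a * c) := by
  have hand : a * n < d := by rwa [← mul_div_assoc, div_lt_one hd] at h
  rw [div_lt_div_iff₀ hd (by positivity)]
  nlinarith

theorem feasible_shift {P1 P2 P11 P21 P12 P22 a ε : ℝ} (h : feasible P1 P2 P11 P21 P12 P22)
    (ha : 0 ≤ a) (hε : 0 ≤ ε) (hbudget : (1 + a) * ε ≤ P2 - (P12 + P22)) :
    feasible P1 P2 P11 P21 (P12 + a * ε) (P22 + ε) := by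
  obtain ⟨h11, h21, h12, h22, hb1, -⟩ := h
  exact ⟨h11, h21, by positivity, by positivity, hb1, by linarith⟩

theorem sinr1_shift {g11 g12 P11 P21 P12 P22 ε : ℝ} (hI : 0 < 1 + g11 * P21 + g12 * P22)
    (hε : 0 ≤ g12 * ε) :
    sinr1 g11 g12 P11 P21 (P12 + sinr1 g11 g12 P11 P21 P12 P22 * ε) (P22 + ε) =
      sinr1 g11 g12 P11 P21 P12 P22 := by
  set a := sinr1 g11 g12 P11 P21 P12 P22 with ha
  have hS : g11 * P11 + g12 * P12 = a * (1 + g11 * P21 + g12 * P22) := by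
    rw [ha, sinr1, div_mul_cancel₀ _ hI.ne']
  rw [sinr1, div_eq_iff (by linarith)]
  linear_combination hS

theorem sinr2_lt_sinr2_shift {g21 g22 P11 P21 P12 P22 a ε : ℝ}
    (hD : 0 < 1 + g21 * P11 + g22 * P12) (ha : 0 ≤ a) (hε : 0 < g22 * ε)
    (h : a * sinr2 g21 g22 P11 P21 P12 P22 < 1) :
    sinr2 g21 g22 P11 P21 P12 P22 < sinr2 g21 g22 P11 P21 (P12 + a * ε) (P22 + ε) := by
  have hshift : sinr2 g21 g22 P11 P21 (P12 + a * ε) (P22 + ε) =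
      (g21 * P21 + g22 * P22 + g22 * ε) / (1 + g21 * P11 + g22 * P12 + a * (g22 * ε)) := by
    rw [sinr2]; ring_nf
  rw [hshift]
  exact div_lt_add_div_add_mul hD ha hε h

theorem slack_power_improvable_general
    (g11 g12 g21 g22 P1 P2 R1 R2 : ℝ)
    (hg11 : 0 < g11) (hg12 : 0 < g12) (hg21 : 0 < g21) (hg22 : 0 < g22)
    (P11 P21 P12 P22 : ℝ)
    (hfeas : feasible P1 P2 P11 P21 P12 P22)
    (hR1 : rate1 g11 g12 P11 P21 P12 P22 = R1)
    (hR2 : rate2 g21 g22 P11 P21 P12 P22 = R2)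
    (hcond : ((2 : ℝ) ^ R1 - 1) * ((2 : ℝ) ^ R2 - 1) < 1)
    (hslack : P12 + P22 < P2) :
    ∃ Q11 Q21 Q12 Q22, feasible P1 P2 Q11 Q21 Q12 Q22 ∧
      rate1 g11 g12 Q11 Q21 Q12 Q22 = R1 ∧ R2 < rate2 g21 g22 Q11 Q21 Q12 Q22 := by
  have ⟨h11, h21, h12, h22, _⟩ := hfeas
  have ha := sinr1_nonneg hg11.le hg12.le hfeas
  have hb := sinr2_nonneg hg21.le hg22.le hfeas
  rw [← hR1, ← hR2, rate1_eq_logb_sinr1, rate2_eq_logb_sinr2,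
    two_rpow_logb_one_add_sub_one (by linarith),
    two_rpow_logb_one_add_sub_one (by linarith)] at hcond
  set a := sinr1 g11 g12 P11 P21 P12 P22
  set ε := (P2 - (P12 + P22)) / (1 + a)
  have hε : 0 < ε := div_pos (by linarith) (by linarith)
  have hbudget : (1 + a) * ε = P2 - (P12 + P22) := mul_div_cancel₀ _ (by linarith)
  refine ⟨P11, P21, P12 + a * ε, P22 + ε, feasible_shift hfeas ha hε.le hbudget.le, ?_, ?_⟩
  · rw [← hR1, rate1_eq_logb_sinr1, rate1_eq_logb_sinr1,
      sinr1_shift (by positivity) (by positivity)]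
  · rw [← hR2, rate2_eq_logb_sinr2, rate2_eq_logb_sinr2]
    refine logb_lt_logb one_lt_two (by linarith) ?_
    linarith [sinr2_lt_sinr2_shift (ε := ε) (by positivity) ha (by positivity) hcond]

theorem slack_power_improvable
    (g11 g12 g21 g22 P1 P2 R1 R2 : ℝ)
    (hg11 : 0 < g11) (hg12 : 0 < g12) (hg21 : 0 < g21) (hg22 : 0 < g22)
    (hP1 : 0 < P1) (hP2 : 0 < P2)
    (P11 P21 P12 P22 : ℝ)
    (hfeas : feasible P1 P2 P11 P21 P12 P22)
    (hR1 : rate1 g11 g12 P11 P21 P12 P22 = R1)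
    (hR2 : rate2 g21 g22 P11 P21 P12 P22 = R2)
    (hcond : ((2 : ℝ) ^ R1 - 1) * ((2 : ℝ) ^ R2 - 1) < 1)
    (hslack : P12 + P22 < P2) :
    ∃ Q11 Q21 Q12 Q22, feasible P1 P2 Q11 Q21 Q12 Q22 ∧
      rate1 g11 g12 Q11 Q21 Q12 Q22 = R1 ∧ R2 < rate2 g21 g22 Q11 Q21 Q12 Q22 :=
  slack_power_improvable_general g11 g12 g21 g22 P1 P2 R1 R2 hg11 hg12 hg21 hg22 P11 P21 P12 P22
    hfeas hR1 hR2 hcond hslack
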